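/- Let m ≥ 3 and let X₁, …, X_m be arbitrary smooth vector fields on ℝ^n. Then the m-ary bracket {f₁, …, f_m} := det((X_i f_j)_{1≤i,j≤m}) induced by the decomposable m-vector field X₁∧⋯∧X_m satisfies the generalized Jacobi identity of order m; that is, every decomposable multivector field of order m ≥ 3 is a generalized Poisson tensor. -/

import Mathlib

/-- A (not necessarily smooth) vector field on `ℝⁿ`, i.e. a map `ℝⁿ → ℝⁿ`. -/
abbrev VF (n : ℕ) : Type := (Fin n → ℝ) → (Fin n → ℝ)

/-- The action of a vector field `X` on a function `f`:
`(X f)(x) = Df(x)[X(x)]` (directional derivative). -/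
noncomputable def vAct {n : ℕ} (X : VF n) (f : (Fin n → ℝ) → ℝ) : (Fin n → ℝ) → ℝ :=
  fun x => fderiv ℝ f x (X x)

/-- The Lie bracket of two vector fields:
`[X, Y](x) = DY(x)[X(x)] − DX(x)[Y(x)]`. -/
noncomputable def vLie {n : ℕ} (X Y : VF n) : VF n :=
  fun x => fderiv ℝ Y x (X x) - fderiv ℝ X x (Y x)

/-- The `m`-ary bracket induced by the decomposable `m`-vector field `Z 0 ∧ ⋯ ∧ Z (m-1)`:
the determinant of the matrix whose `(i, j)` entry is `(Z i) (f j)`. -/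
noncomputable def detBracket {n m : ℕ} (Z : Fin m → VF n)
    (f : Fin m → ((Fin n → ℝ) → ℝ)) : (Fin n → ℝ) → ℝ :=
  fun x => Matrix.det (Matrix.of fun i j => vAct (Z i) (f j) x)

/-- The generalized Jacobi identity of order `m` for an `m`-ary bracket `B` on smooth
functions on `ℝⁿ`:
`∑_{σ ∈ S_{2m−1}} sign σ • B(B(f_{σ(1)}, …, f_{σ(m)}), f_{σ(m+1)}, …, f_{σ(2m−1)}) = 0`. -/
def GJI (n m : ℕ) (B : (Fin m → ((Fin n → ℝ) → ℝ)) → ((Fin n → ℝ) → ℝ)) : Prop :=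
  ∀ f : Fin (2 * m - 1) → ((Fin n → ℝ) → ℝ), (∀ i, ContDiff ℝ (⊤ : ℕ∞) (f i)) →
    ∀ x, (∑ σ : Equiv.Perm (Fin (2 * m - 1)),
      ((Equiv.Perm.sign σ : ℤ) : ℝ) *
        B (fun i : Fin m =>
            if _hi : (i : ℕ) = 0 then
              B (fun k : Fin m => f (σ ⟨(k : ℕ), lt_of_lt_of_le k.isLt (by omega)⟩))
            else f (σ ⟨m - 1 + (i : ℕ), by have hi := i.isLt; omega⟩)) x) = 0

/-!
Expand the outer bracket by the Leibniz formula and differentiate the inner one by the product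
rule. A term of the result is then, for each permutation `σ` of the arguments, a product over the
`2m - 1` arguments of linear functionals ("rows") applied to them, so the signed sum over `σ` of
that term is a determinant with these rows. Since `m ≥ 3`, some `Z i` differs both from the field
applied to the inner bracket and from the field of the inner factor that this derivative lands on;
`Z i` then acts as a plain derivative on one inner and on one outer argument, so two rows coincide
and the determinant vanishes.
-/

open Finset Equiv

theorem sum_sign_mul_prod_eq_zero_of_row_eq {α β γ R : Type*} [Fintype α] [DecidableEq α]
    [Fintype β] [CommRing R] (e : β ≃ α) (r : β → γ → R) (f : α → γ) {b₁ b₂ : β}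
    (hb : b₁ ≠ b₂) (hr : r b₁ = r b₂) :
    ∑ σ : Perm α, ((Perm.sign σ : ℤ) : R) * ∏ b, r b (f (σ (e b))) = 0 := by
  have hdet : ∑ σ : Perm α, ((Perm.sign σ : ℤ) : R) * ∏ b, r b (f (σ (e b))) =
      (Matrix.of fun a i => r (e.symm a) (f i)).transpose.det := by
    rw [Matrix.det_apply']
    refine sum_congr rfl fun σ _ => ?_
    rw [← e.prod_comp]
    simp
  rw [hdet, Matrix.det_transpose]
  exact Matrix.det_zero_of_row_eq (e.injective.ne hb) (by ext i; simp [hr])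

section DetBracket

variable {n m : ℕ}

theorem contDiff_vAct {k : WithTop ℕ∞} {X : VF n} {g : (Fin n → ℝ) → ℝ}
    (hX : ContDiff ℝ k X) (hg : ContDiff ℝ (k + 1) g) : ContDiff ℝ k (vAct X g) :=
  (hg.fderiv_right le_rfl).clm_apply hX

theorem detBracket_eq_sum (Z : Fin m → VF n) (g : Fin m → (Fin n → ℝ) → ℝ)
    (x : Fin n → ℝ) :
    detBracket Z g x = ∑ ρ : Perm (Fin m), ((Perm.sign ρ : ℤ) : ℝ) *
      ∏ l, vAct (Z (ρ l)) (g l) x := by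
  simp only [detBracket, Matrix.det_apply, Matrix.of_apply, Units.smul_def, zsmul_eq_mul]

theorem vAct_detBracket (Z : Fin m → VF n) (g : Fin m → (Fin n → ℝ) → ℝ)
    (Y : VF n) (x : Fin n → ℝ) (hg : ∀ k l, DifferentiableAt ℝ (vAct (Z k) (g l)) x) :
    vAct Y (detBracket Z g) x = ∑ ρ : Perm (Fin m), ((Perm.sign ρ : ℤ) : ℝ) *
      ∑ l, vAct Y (vAct (Z (ρ l)) (g l)) x * ∏ l' ∈ univ.erase l, vAct (Z (ρ l')) (g l') x := by
  have hD : HasFDerivAt (detBracket Z g)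
      (∑ ρ : Perm (Fin m), ((Perm.sign ρ : ℤ) : ℝ) •
        ∑ l, (∏ l' ∈ univ.erase l, vAct (Z (ρ l')) (g l') x) •
          fderiv ℝ (vAct (Z (ρ l)) (g l)) x) x := by
    rw [show detBracket Z g = _ from funext (detBracket_eq_sum Z g)]
    exact HasFDerivAt.fun_sum fun ρ _ =>
      (HasFDerivAt.finsetProd fun l _ => (hg (ρ l) l).hasFDerivAt).const_mul _
  simp [vAct, hD.fderiv, mul_comm]

theorem detBracket_cons (Z : Fin (m + 1) → VF n) (g₀ : (Fin n → ℝ) → ℝ)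
    (g : Fin m → (Fin n → ℝ) → ℝ) (x : Fin n → ℝ) :
    detBracket Z (Fin.cons g₀ g) x = ∑ τ : Perm (Fin (m + 1)), ((Perm.sign τ : ℤ) : ℝ) *
      (vAct (Z (τ 0)) g₀ x * ∏ j, vAct (Z (τ j.succ)) (g j) x) := by
  simp only [detBracket_eq_sum, Fin.prod_univ_succ, Fin.cons_zero, Fin.cons_succ]

/-- Inner arguments of the Jacobiator occupy the slots `0, …, m`, outer ones `m + 1, …, 2m`. -/
def jacobiIndex (m : ℕ) : Fin (m + 1) ⊕ Fin m ≃ Fin (2 * (m + 1) - 1) :=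
  finSumFinEquiv.trans (finCongr (by omega))

theorem jacobiArgs_eq_cons {β : Type*} (B : (Fin (m + 1) → β) → β)
    (f : Fin (2 * (m + 1) - 1) → β) :
    (fun i : Fin (m + 1) =>
      if _hi : (i : ℕ) = 0 then B (fun k : Fin (m + 1) => f ⟨k, by omega⟩)
      else f ⟨m + 1 - 1 + i, by omega⟩) =
    Fin.cons (B fun k => f (jacobiIndex m (.inl k))) fun j => f (jacobiIndex m (.inr j)) := by
  funext i
  cases i using Fin.cases with
  | zero => rfl
  | succ j =>
    simp only [Fin.val_succ, Nat.add_one_ne_zero, dite_false, Fin.cons_succ]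
    congr 1
    ext
    simp [jacobiIndex]
    omega

/-- The rows of the expanded term indexed by the permutations `τ`, `ρ` of the outer and inner
Leibniz expansions and the inner slot `l` differentiated by `Z (τ 0)`. -/
noncomputable def shapeRow (Z : Fin (m + 1) → VF n) (x : Fin n → ℝ) (τ ρ : Perm (Fin (m + 1)))
    (l : Fin (m + 1)) : Fin (m + 1) ⊕ Fin m → ((Fin n → ℝ) → ℝ) → ℝ :=
  Sum.elim
    (Function.update (fun l' g => vAct (Z (ρ l')) g x) l
      fun g => vAct (Z (τ 0)) (vAct (Z (ρ l)) g) x)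
    fun j g => vAct (Z (τ j.succ)) g x

theorem prod_shapeRow (Z : Fin (m + 1) → VF n) (x : Fin n → ℝ) (τ ρ : Perm (Fin (m + 1)))
    (l : Fin (m + 1)) (φ : Fin (m + 1) ⊕ Fin m → (Fin n → ℝ) → ℝ) :
    ∏ s, shapeRow Z x τ ρ l s (φ s) =
      vAct (Z (τ 0)) (vAct (Z (ρ l)) (φ (.inl l))) x *
        (∏ l' ∈ univ.erase l, vAct (Z (ρ l')) (φ (.inl l')) x) *
        ∏ j, vAct (Z (τ j.succ)) (φ (.inr j)) x := by
  rw [Fintype.prod_sum_type, ← mul_prod_erase univ _ (mem_univ l)]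
  refine congrArg₂ (· * ·) (congrArg₂ (· * ·) (by simp [shapeRow]) ?_) rfl
  exact prod_congr rfl fun l' hl' => by simp [shapeRow, (mem_erase.mp hl').1]

theorem detBracket_cons_detBracket (Z : Fin (m + 1) → VF n) (hZ : ∀ i, ContDiff ℝ 1 (Z i))
    (φ : Fin (m + 1) ⊕ Fin m → (Fin n → ℝ) → ℝ) (hφ : ∀ s, ContDiff ℝ 2 (φ s))
    (x : Fin n → ℝ) :
    detBracket Z (Fin.cons (detBracket Z fun l => φ (.inl l)) fun j => φ (.inr j)) x =
      ∑ τ : Perm (Fin (m + 1)), ∑ ρ : Perm (Fin (m + 1)), ∑ l,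
        ((Perm.sign τ : ℤ) : ℝ) * ((Perm.sign ρ : ℤ) : ℝ) * ∏ s, shapeRow Z x τ ρ l s (φ s) := by
  have hdiff : ∀ k l, DifferentiableAt ℝ (vAct (Z k) (φ (.inl l))) x := fun k l =>
    (contDiff_vAct (hZ k) (hφ _)).differentiable one_ne_zero x
  simp only [detBracket_cons, vAct_detBracket Z _ _ x hdiff, prod_shapeRow, mul_sum, sum_mul]
  refine sum_congr rfl fun τ _ => sum_congr rfl fun ρ _ => sum_congr rfl fun l _ => ?_
  ring

theorem exists_shapeRow_eq (hm : 2 ≤ m) (Z : Fin (m + 1) → VF n) (x : Fin n → ℝ)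
    (τ ρ : Perm (Fin (m + 1))) (l : Fin (m + 1)) :
    ∃ s₁ s₂, s₁ ≠ s₂ ∧ shapeRow Z x τ ρ l s₁ = shapeRow Z x τ ρ l s₂ := by
  obtain ⟨i, hiτ, hiρ⟩ : ∃ i, i ≠ τ 0 ∧ i ≠ ρ l := Fin.exists_ne_and_ne_of_two_lt _ _ (by omega)
  obtain ⟨j, hj⟩ := Fin.exists_succ_eq.mpr (τ.symm_apply_eq.not.mpr hiτ)
  refine ⟨.inl (ρ.symm i), .inr j, Sum.inl_ne_inr, ?_⟩
  have hl : ρ.symm i ≠ l := ρ.symm_apply_eq.not.mpr hiρ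
  simp [shapeRow, hl, hj]

end DetBracket

/-- Let `m ≥ 3` and let `Z₁, …, Z_m` be arbitrary smooth vector fields
on `ℝⁿ`. Then the `m`-ary bracket `{f₁, …, f_m} = det((Zᵢ fⱼ))` induced by the
decomposable `m`-vector field `Z₁∧⋯∧Z_m` satisfies the generalized Jacobi identity of
order `m`; i.e. every decomposable multivector field of order `m ≥ 3` is a generalized
Poisson tensor. -/
theorem statement11 (n m : ℕ) (hm : 3 ≤ m) (Z : Fin m → VF n)
    (hZ : ∀ i, ContDiff ℝ (⊤ : ℕ∞) (Z i)) :
    GJI n m (detBracket Z) := by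
  intro f hf x
  obtain ⟨m, rfl⟩ : ∃ m', m = m' + 1 := ⟨m - 1, by omega⟩
  have hZ1 : ∀ i, ContDiff ℝ 1 (Z i) := fun i => contDiff_infty.mp (hZ i) 1
  have hf2 : ∀ i, ContDiff ℝ 2 (f i) := fun i => contDiff_infty.mp (hf i) 2
  calc _ = ∑ σ : Perm (Fin (2 * (m + 1) - 1)), ((Perm.sign σ : ℤ) : ℝ) *
        ∑ τ : Perm (Fin (m + 1)), ∑ ρ : Perm (Fin (m + 1)), ∑ l,
          ((Perm.sign τ : ℤ) : ℝ) * ((Perm.sign ρ : ℤ) : ℝ) *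
            ∏ s, shapeRow Z x τ ρ l s (f (σ (jacobiIndex m s))) :=
        sum_congr rfl fun σ _ => by
          rw [jacobiArgs_eq_cons (detBracket Z) fun a => f (σ a),
            detBracket_cons_detBracket Z hZ1 (fun s => f (σ (jacobiIndex m s))) fun s => hf2 _]
    _ = ∑ τ : Perm (Fin (m + 1)), ∑ ρ : Perm (Fin (m + 1)), ∑ l,
          ((Perm.sign τ : ℤ) : ℝ) * ((Perm.sign ρ : ℤ) : ℝ) *
            ∑ σ : Perm (Fin (2 * (m + 1) - 1)), ((Perm.sign σ : ℤ) : ℝ) *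
              ∏ s, shapeRow Z x τ ρ l s (f (σ (jacobiIndex m s))) := by
        simp only [mul_sum, mul_left_comm ((Perm.sign _ : ℤ) : ℝ)]
        rw [sum_comm]; refine sum_congr rfl fun τ _ => ?_
        rw [sum_comm]; refine sum_congr rfl fun ρ _ => ?_
        rw [sum_comm]
    _ = 0 := sum_eq_zero fun τ _ => sum_eq_zero fun ρ _ => sum_eq_zero fun l _ => by
        obtain ⟨s₁, s₂, hs, hrow⟩ := exists_shapeRow_eq (by omega) Z x τ ρ l
        rw [sum_sign_mul_prod_eq_zero_of_row_eq (jacobiIndex m) _ f hs hrow, mul_zero]
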